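/- arXiv:2602.03001 — 2 statements merged into one kernel-verified Lean document; each statement's English description precedes it below -/
import Mathlib

section
/- Let X be a random m×m real symmetric positive semidefinite matrix with integrable entries. Then E[tr(X^{1/2})] ≤ tr((E[X])^{1/2}), where M^{1/2} denotes the unique positive semidefinite square root of a positive semidefinite matrix M. -/
/-!
For positive definite `S` and symmetric `R`, expanding `tr((R - S⁻¹) S (R - S⁻¹)) ≥ 0` gives
`2 tr R ≤ tr(S R²) + tr S⁻¹`. With `R = √A` this bounds `tr √A` by a function that is affine in
`A`, so it survives taking expectations. For `M = E[X]` and `S = (√M + δ)⁻¹` the bound becomes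
`E[tr √X] ≤ tr √M + δ m / 2`; the regularisation `δ > 0` makes `S` exist when `M` is singular,
and letting `δ → 0` finishes the proof.
-/

open MeasureTheory

namespace Matrix.PosSemidef

open scoped ComplexOrder

/-- The positive semidefinite square root of a positive semidefinite matrix
(removed from Mathlib; restored with its old definition). -/
noncomputable def sqrt {𝕜 : Type*} [RCLike 𝕜] {n : Type*} [Fintype n] [DecidableEq n]
    {A : Matrix n n 𝕜} (hA : A.PosSemidef) : Matrix n n 𝕜 :=
  hA.1.eigenvectorUnitary.1 * Matrix.diagonal ((↑) ∘ (fun x => Real.sqrt x) ∘ hA.1.eigenvalues) *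
    (star hA.1.eigenvectorUnitary : Matrix n n 𝕜)

end Matrix.PosSemidef

open scoped MatrixOrder ComplexOrder

namespace Matrix

section RCLike

variable {𝕜 n : Type*} [RCLike 𝕜] [Fintype n] [DecidableEq n] {A : Matrix n n 𝕜}

theorem PosSemidef.sqrt_eq_cfcSqrt (hA : A.PosSemidef) : hA.sqrt = CFC.sqrt A := by
  rw [CFC.sqrt_eq_cfc, cfc_nnreal_eq_real _ A, hA.1.cfc_eq]
  simp only [IsHermitian.cfc, PosSemidef.sqrt, Unitary.conjStarAlgAut_apply, Real.coe_sqrt,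
    Real.coe_toNNReal']
  congr 4 with i
  simp [max_eq_left (hA.eigenvalues_nonneg i)]

theorem PosSemidef.posSemidef_sqrt (hA : A.PosSemidef) : hA.sqrt.PosSemidef := by
  rw [hA.sqrt_eq_cfcSqrt, ← nonneg_iff_posSemidef]
  exact CFC.sqrt_nonneg A

theorem PosSemidef.sqrt_mul_self (hA : A.PosSemidef) : hA.sqrt * hA.sqrt = A := by
  rw [hA.sqrt_eq_cfcSqrt]
  exact CFC.sqrt_mul_sqrt_self A hA.nonneg

end RCLike

variable {n : Type*} [Fintype n] [DecidableEq n]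

theorem PosSemidef.trace_mul_nonneg {A B : Matrix n n ℝ} (hA : A.PosSemidef) (hB : B.PosSemidef) :
    0 ≤ (A * B).trace := by
  obtain ⟨X, rfl⟩ := CStarAlgebra.nonneg_iff_eq_star_mul_self.mp hA.nonneg
  rw [mul_assoc, trace_mul_comm]
  exact (hB.mul_mul_conjTranspose_same X).trace_nonneg

theorem two_mul_trace_le_trace_mul_mul_self_add_trace_inv {R S : Matrix n n ℝ} (hR : R.IsHermitian)
    (hS : S.PosDef) : 2 * R.trace ≤ (S * (R * R)).trace + S⁻¹.trace := by
  have hdet : IsUnit S.det := hS.det_pos.ne'.isUnit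
  have hC : (R - S⁻¹).IsHermitian := hR.sub hS.inv.isHermitian
  have hpsd := hS.posSemidef.conjTranspose_mul_mul_same (R - S⁻¹)
  rw [hC.eq] at hpsd
  have expand : (R - S⁻¹) * S * (R - S⁻¹) = R * (S * R) - R - R + S⁻¹ := by
    simp only [sub_mul, mul_sub, mul_nonsing_inv _ hdet, nonsing_inv_mul _ hdet, mul_assoc, mul_one,
      one_mul]
    abel
  have := hpsd.trace_nonneg
  rw [expand, trace_add, trace_sub, trace_sub, trace_mul_comm, mul_assoc] at this
  linarith

theorem trace_inv_add_smul_one_mul_mul_self_le {B : Matrix n n ℝ} (hB : B.PosSemidef) {δ : ℝ}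
    (hδ : 0 < δ) : ((B + δ • 1)⁻¹ * (B * B)).trace ≤ B.trace := by
  have hD : (B + δ • 1).PosDef := PosDef.posSemidef_add hB (PosDef.one.smul hδ)
  have hSD : (B + δ • 1)⁻¹ * (B + δ • 1) = 1 := nonsing_inv_mul _ hD.det_pos.ne'.isUnit
  have split : (B + δ • 1)⁻¹ * (B * B) + δ • ((B + δ • 1)⁻¹ * B) = B := by
    calc _ = (B + δ • 1)⁻¹ * (B + δ • 1) * B := by
          rw [mul_assoc, add_mul, mul_add, smul_mul, one_mul, Matrix.mul_smul]
      _ = B := by rw [hSD, one_mul]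
  have := hD.inv.posSemidef.trace_mul_nonneg hB
  have htr := congrArg trace split
  rw [trace_add, trace_smul, smul_eq_mul] at htr
  nlinarith

end Matrix

section Integral

open Matrix

variable {Ω n : Type*} [MeasurableSpace Ω] {μ : Measure Ω} [Fintype n]
  {X : Ω → Matrix n n ℝ}

theorem integrable_trace_mul (hX : ∀ i j, Integrable (fun ω => X ω i j) μ) (S : Matrix n n ℝ) :
    Integrable (fun ω => (S * X ω).trace) μ := by
  simp only [trace, diag_apply, mul_apply]
  exact integrable_finsetSum _ fun i _ => integrable_finsetSum _ fun j _ => (hX j i).const_mul _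

theorem integral_trace_mul (hX : ∀ i j, Integrable (fun ω => X ω i j) μ) (S : Matrix n n ℝ) :
    ∫ ω, (S * X ω).trace ∂μ = (S * of fun i j => ∫ ω, X ω i j ∂μ).trace := by
  simp only [trace, diag_apply, mul_apply, of_apply]
  rw [integral_finsetSum _ fun i _ =>
    integrable_finsetSum _ fun j _ => (hX j i).const_mul (S i j)]
  refine Finset.sum_congr rfl fun i _ => ?_
  rw [integral_finsetSum _ fun j _ => (hX j i).const_mul (S i j)]
  simp_rw [integral_const_mul]

variable [DecidableEq n] [IsProbabilityMeasure μ]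

theorem integral_trace_sqrt_le_trace_sqrt_integral_add (hX : ∀ ω, (X ω).PosSemidef)
    (hint : ∀ i j, Integrable (fun ω => X ω i j) μ)
    (hM : (of fun i j => ∫ ω, X ω i j ∂μ).PosSemidef) {δ : ℝ} (hδ : 0 < δ) :
    ∫ ω, (hX ω).sqrt.trace ∂μ ≤ hM.sqrt.trace + δ * Fintype.card n / 2 := by
  set B := hM.sqrt
  set S := (B + δ • 1)⁻¹
  have hD : (B + δ • 1).PosDef := PosDef.posSemidef_add hM.posSemidef_sqrt (PosDef.one.smul hδ)
  have hS : S.PosDef := hD.inv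
  have hS_inv_trace : S⁻¹.trace = B.trace + δ * Fintype.card n := by
    rw [nonsing_inv_nonsing_inv _ hD.det_pos.ne'.isUnit, trace_add, trace_smul, trace_one,
      smul_eq_mul]
  have pointwise (ω : Ω) : (hX ω).sqrt.trace ≤ ((S * X ω).trace + S⁻¹.trace) / 2 := by
    have := two_mul_trace_le_trace_mul_mul_self_add_trace_inv (hX ω).posSemidef_sqrt.isHermitian hS
    rw [(hX ω).sqrt_mul_self] at this
    linarith
  calc ∫ ω, (hX ω).sqrt.trace ∂μ ≤ ∫ ω, ((S * X ω).trace + S⁻¹.trace) / 2 ∂μ :=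
        integral_mono_of_nonneg (.of_forall fun ω => (hX ω).posSemidef_sqrt.trace_nonneg)
          (((integrable_trace_mul hint S).add (integrable_const _)).div_const 2)
          (.of_forall pointwise)
    _ = ((S * of fun i j => ∫ ω, X ω i j ∂μ).trace + S⁻¹.trace) / 2 := by
        rw [integral_div, integral_add (integrable_trace_mul hint S) (integrable_const _),
          integral_trace_mul hint, integral_const, probReal_univ, one_smul]
    _ ≤ (B.trace + S⁻¹.trace) / 2 := by
        rw [← hM.sqrt_mul_self]
        gcongr
        exact trace_inv_add_smul_one_mul_mul_self_le hM.posSemidef_sqrt hδ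
    _ = B.trace + δ * Fintype.card n / 2 := by
        rw [hS_inv_trace]
        ring

end Integral

open Filter Topology in
/-- Let `X` be a random `m×m` real symmetric positive semidefinite matrix with integrable
entries.  Then `E[tr(X^{1/2})] ≤ tr((E[X])^{1/2})`, where `M^{1/2}` denotes the unique positive
semidefinite square root of a positive semidefinite matrix `M`.
(The positive semidefiniteness of `E[X]`, recorded in the hypothesis `hEX`, is a consequence of
the other hypotheses, and is needed to state the square root of the expectation.) -/
theorem stmt3 {m : ℕ} {Ω : Type*} [MeasurableSpace Ω] (μ : Measure Ω) [IsProbabilityMeasure μ]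
    (X : Ω → Matrix (Fin m) (Fin m) ℝ)
    (hX : ∀ ω, (X ω).PosSemidef)
    (hint : ∀ i j, Integrable (fun ω => X ω i j) μ)
    (hEX : (Matrix.of fun i j => ∫ ω, X ω i j ∂μ).PosSemidef) :
    ∫ ω, ((hX ω).sqrt).trace ∂μ ≤ hEX.sqrt.trace := by
  have hlim : Tendsto (fun δ : ℝ => hEX.sqrt.trace + δ * m / 2) (𝓝[>] 0) (𝓝 hEX.sqrt.trace) := by
    refine tendsto_nhdsWithin_of_tendsto_nhds <|
      (continuous_const.add ((continuous_id.mul continuous_const).div_const 2)).tendsto' 0 _ ?_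
    simp
  refine ge_of_tendsto hlim (eventually_nhdsWithin_of_forall fun δ hδ => ?_)
  simpa using integral_trace_sqrt_le_trace_sqrt_integral_add hX hint hEX hδ
end

section
/- Let L : ℝ^d → ℝ be differentiable, L∞-smooth with respect to the ℓ∞ norm, and bounded below with infimum L*. Let θ ∈ (0,1) and K ≥ 1. On a probability space, let (x_k) be random vectors with x_0 deterministic and x_{k+1} = x_k − η·sign(g_k) with constant learning rate η = 1/√(L∞·K), where each g_k is integrable, conditionally unbiased E[g_k ∣ x_0, …, x_k] = ∇L(x_k), and satisfies E[‖g_k − ∇L(x_k)‖₁ ∣ x_0, …, x_k] ≤ θ·‖∇L(x_k)‖₁ almost surely. Then (1/K)·∑_{k=0}^{K−1} E[‖∇L(x_k)‖₁] ≤ (√(L∞) / ((1 − θ)·√K)) · (L(x_0) − L* + 1/2). -/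
open MeasureTheory

def l1norm {d : ℕ} (v : EuclideanSpace ℝ (Fin d)) : ℝ := ∑ i, |v i|

noncomputable def linfnorm {d : ℕ} (v : EuclideanSpace ℝ (Fin d)) : ℝ := ⨆ i, |v i|

noncomputable def signVec {d : ℕ} (v : EuclideanSpace ℝ (Fin d)) : EuclideanSpace ℝ (Fin d) :=
  WithLp.toLp 2 (fun i => Real.sign (v i))

def genBy {Ω : Type*} {d : ℕ} (x : ℕ → Ω → EuclideanSpace ℝ (Fin d)) (k : ℕ) :
    MeasurableSpace Ω :=
  ⨆ i ∈ Finset.range (k + 1), MeasurableSpace.comap (x i) inferInstance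

/-!
For the step `x - η • signVec w`, the descent lemma of the `ℓ∞`-smooth `L` gives
`L (x - η • signVec w) ≤ L x - η ⟪∇L x, signVec w⟫ + Linf η² / 2`. Coordinatewise
`a · sign b ≥ |a| - |b - a| + sign a · (b - a)`; the last term is linear in the noise
`w - ∇L x` with a coefficient known at time `k`, so it vanishes in expectation by unbiasedness,
while the relative-noise condition bounds `E ‖g_k - ∇L x_k‖₁` by `θ E ‖∇L x_k‖₁`. Hence
`E L` decreases at step `k` by at least `η (1 - θ) E ‖∇L x_k‖₁ - Linf η² / 2`, and telescoping
over `K` steps with `L ≥ L*` and `η = 1 / √(Linf K)` gives the bound. The iterates stay in a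
ball of radius `K η √d`, which makes every `L (x_k)` integrable.
-/

open RealInnerProductSpace

section Norms
variable {d : ℕ}

lemma abs_le_linfnorm (v : EuclideanSpace ℝ (Fin d)) (i : Fin d) : |v i| ≤ linfnorm v :=
  le_ciSup (f := fun i => |v i|) (Set.finite_range _).bddAbove i

lemma linfnorm_nonneg (v : EuclideanSpace ℝ (Fin d)) : 0 ≤ linfnorm v :=
  Real.iSup_nonneg fun _ => abs_nonneg _

lemma linfnorm_smul (c : ℝ) (v : EuclideanSpace ℝ (Fin d)) :
    linfnorm (c • v) = |c| * linfnorm v := by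
  simp only [linfnorm, Real.mul_iSup_of_nonneg (abs_nonneg c), PiLp.smul_apply, smul_eq_mul,
    abs_mul]

lemma Real.abs_sign_le_one (r : ℝ) : |Real.sign r| ≤ 1 := by
  rcases Real.sign_apply_eq r with h | h | h <;> simp [h]

lemma linfnorm_signVec_le_one (v : EuclideanSpace ℝ (Fin d)) : linfnorm (signVec v) ≤ 1 :=
  Real.iSup_le (fun _ => Real.abs_sign_le_one _) zero_le_one

lemma real_inner_eq_sum (u v : EuclideanSpace ℝ (Fin d)) :
    ⟪u, v⟫ = ∑ i, u i * v i := by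
  simp [PiLp.inner_apply, mul_comm]

lemma abs_real_inner_le_l1norm_mul_linfnorm (u v : EuclideanSpace ℝ (Fin d)) :
    |⟪u, v⟫| ≤ l1norm u * linfnorm v := by
  rw [real_inner_eq_sum, l1norm, Finset.sum_mul]
  refine (Finset.abs_sum_le_sum_abs _ _).trans (Finset.sum_le_sum fun i _ => ?_)
  rw [abs_mul]
  exact mul_le_mul_of_nonneg_left (abs_le_linfnorm v i) (abs_nonneg _)

lemma norm_signVec_le (v : EuclideanSpace ℝ (Fin d)) : ‖signVec v‖ ≤ Real.sqrt d := by
  rw [EuclideanSpace.norm_eq]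
  refine Real.sqrt_le_sqrt ?_
  calc ∑ i, ‖signVec v i‖ ^ 2 ≤ ∑ _i : Fin d, (1 : ℝ) :=
        Finset.sum_le_sum fun i _ => by
          simpa [signVec] using Real.abs_sign_le_one (v i)
    _ = d := by simp

end Norms

section Descent
variable {d : ℕ} {L : EuclideanSpace ℝ (Fin d) → ℝ}

lemma hasDerivAt_comp_add_smul (hL : Differentiable ℝ L) (x v : EuclideanSpace ℝ (Fin d))
    (t : ℝ) : HasDerivAt (fun s : ℝ => L (x + s • v)) ⟪gradient L (x + t • v), v⟫ t := by
  have hline : HasDerivAt (fun s : ℝ => x + s • v) v t := by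
    simpa using ((hasDerivAt_id t).smul_const v).const_add x
  exact (hL _).hasGradientAt.hasFDerivAt.comp_hasDerivAt t hline

lemma le_add_inner_gradient_add_sq {Linf : ℝ} (hL : Differentiable ℝ L)
    (hsmooth : ∀ x y, l1norm (gradient L x - gradient L y) ≤ Linf * linfnorm (x - y))
    (x v : EuclideanSpace ℝ (Fin d)) :
    L (x + v) ≤ L x + ⟪gradient L x, v⟫ + Linf / 2 * linfnorm v ^ 2 := by
  set m := ⟪gradient L x, v⟫
  set C := Linf * linfnorm v ^ 2
  -- `ψ` is antitone on `[0, 1]`, since `ψ' t = ⟪∇L(x + t v) - ∇L x, v⟫ - C t ≤ 0` by smoothness.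
  set ψ : ℝ → ℝ := fun t => L (x + t • v) - t * m - C * t ^ 2 / 2
  have hψ (t : ℝ) : HasDerivAt ψ (⟪gradient L (x + t • v), v⟫ - m - C * t) t := by
    have hlin : HasDerivAt (fun s : ℝ => s * m) m t := by
      simpa using (hasDerivAt_id t).mul_const m
    have hquad : HasDerivAt (fun s : ℝ => C * s ^ 2 / 2) (C * t) t :=
      (((hasDerivAt_pow 2 t).const_mul C).div_const 2).congr_deriv (by ring)
    exact ((hasDerivAt_comp_add_smul hL x v t).sub hlin).sub hquad
  have hψ' (t : ℝ) (ht : t ∈ interior (Set.Icc (0 : ℝ) 1)) : deriv ψ t ≤ 0 := by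
    rw [interior_Icc] at ht
    rw [(hψ t).deriv, sub_nonpos]
    calc ⟪gradient L (x + t • v), v⟫ - m = ⟪gradient L (x + t • v) - gradient L x, v⟫ :=
          (inner_sub_left _ _ _).symm
      _ ≤ l1norm (gradient L (x + t • v) - gradient L x) * linfnorm v :=
          (le_abs_self _).trans (abs_real_inner_le_l1norm_mul_linfnorm _ _)
      _ ≤ Linf * linfnorm (x + t • v - x) * linfnorm v :=
          mul_le_mul_of_nonneg_right (hsmooth _ _) (linfnorm_nonneg v)
      _ = C * t := by
          rw [add_sub_cancel_left, linfnorm_smul, abs_of_pos ht.1]; ring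
  have hanti : AntitoneOn ψ (Set.Icc 0 1) :=
    antitoneOn_of_deriv_nonpos (convex_Icc 0 1)
      (fun t _ => (hψ t).continuousAt.continuousWithinAt)
      (fun t _ => (hψ t).differentiableAt.differentiableWithinAt) hψ'
  have h01 := hanti (Set.left_mem_Icc.2 zero_le_one) (Set.right_mem_Icc.2 zero_le_one)
    zero_le_one
  simp only [ψ, zero_smul, one_smul, add_zero] at h01
  linarith

end Descent

section SignStep
variable {d : ℕ}

lemma abs_sub_abs_sub_add_sign_mul_le (a b : ℝ) :
    |a| - |b - a| + Real.sign a * (b - a) ≤ a * Real.sign b := by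
  unfold Real.sign
  split_ifs <;> cases abs_cases a <;> cases abs_cases (b - a) <;> linarith

noncomputable def signAlignBound (u w : EuclideanSpace ℝ (Fin d)) : ℝ :=
  l1norm u - l1norm (w - u) + ⟪signVec u, w - u⟫

lemma signAlignBound_le_inner (u w : EuclideanSpace ℝ (Fin d)) :
    signAlignBound u w ≤ ⟪u, signVec w⟫ := by
  simp only [signAlignBound, l1norm, real_inner_eq_sum, ← Finset.sum_sub_distrib,
    ← Finset.sum_add_distrib]
  exact Finset.sum_le_sum fun i _ => abs_sub_abs_sub_add_sign_mul_le (u i) (w i)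

lemma le_sub_smul_signVec {L : EuclideanSpace ℝ (Fin d) → ℝ} {Linf η : ℝ}
    (hL : Differentiable ℝ L)
    (hsmooth : ∀ x y, l1norm (gradient L x - gradient L y) ≤ Linf * linfnorm (x - y))
    (hLinf : 0 ≤ Linf) (hη : 0 ≤ η) (x w : EuclideanSpace ℝ (Fin d)) :
    L (x - η • signVec w) ≤ L x - η * signAlignBound (gradient L x) w + Linf / 2 * η ^ 2 := by
  have hstep : linfnorm (-(η • signVec w)) ^ 2 ≤ η ^ 2 := by
    rw [← neg_smul, linfnorm_smul, abs_neg, abs_of_nonneg hη]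
    exact pow_le_pow_left₀ (mul_nonneg hη (linfnorm_nonneg _))
      (mul_le_of_le_one_right hη (linfnorm_signVec_le_one w)) 2
  have hdescent := le_add_inner_gradient_add_sq hL hsmooth x (-(η • signVec w))
  rw [← sub_eq_add_neg, inner_neg_right, real_inner_smul_right] at hdescent
  have halign := mul_le_mul_of_nonneg_left (signAlignBound_le_inner (gradient L x) w) hη
  have hquad := mul_le_mul_of_nonneg_left hstep (div_nonneg hLinf zero_le_two)
  linarith

end SignStep

section Measurability
variable {d : ℕ}

@[fun_prop]
lemma Real.measurable_sign : Measurable Real.sign := by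
  unfold Real.sign
  exact Measurable.ite measurableSet_Iio measurable_const
    (Measurable.ite measurableSet_Ioi measurable_const measurable_const)

lemma measurable_signVec : Measurable (signVec (d := d)) := by
  unfold signVec
  fun_prop

lemma measurable_gradient (L : EuclideanSpace ℝ (Fin d) → ℝ) : Measurable (gradient L) :=
  (InnerProductSpace.toDual ℝ _).symm.continuous.measurable.comp (measurable_fderiv ℝ L)

end Measurability

section CondExp
variable {Ω E : Type*} {m m₀ : MeasurableSpace Ω} {μ : Measure Ω}
  [NormedAddCommGroup E] [InnerProductSpace ℝ E] {S W : Ω → E} {C : ℝ}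

lemma integrable_inner_of_norm_le (hS : AEStronglyMeasurable S μ) (hSC : ∀ ω, ‖S ω‖ ≤ C)
    (hW : Integrable W μ) : Integrable (fun ω => ⟪S ω, W ω⟫) μ :=
  (hW.norm.const_mul C).mono' (hS.inner hW.aestronglyMeasurable) (ae_of_all _ fun ω =>
    (norm_inner_le_norm _ _).trans (mul_le_mul_of_nonneg_right (hSC ω) (norm_nonneg _)))

lemma integral_inner_eq_zero_of_condExp_eq_zero [CompleteSpace E] (hm : m ≤ m₀)
    [SigmaFinite (μ.trim hm)] (hS : StronglyMeasurable[m] S) (hSC : ∀ ω, ‖S ω‖ ≤ C)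
    (hW : Integrable W μ) (hW₀ : μ[W | m] =ᵐ[μ] 0) : ∫ ω, ⟪S ω, W ω⟫ ∂μ = 0 := by
  have hSW := integrable_inner_of_norm_le (hS.mono hm).aestronglyMeasurable hSC hW
  rw [← integral_condExp hm]
  refine integral_eq_zero_of_ae ?_
  filter_upwards [condExp_bilin_of_stronglyMeasurable_left (innerSL ℝ) hS hSW hW, hW₀]
    with ω hω hω₀
  rw [hω₀, Pi.zero_apply, map_zero] at hω
  exact hω

end CondExp

section SignSGDStep
variable {d : ℕ} {Ω : Type*} {m m₀ : MeasurableSpace Ω} {μ : Measure Ω}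

lemma integrable_l1norm {F : Ω → EuclideanSpace ℝ (Fin d)} (hF : Integrable F μ) :
    Integrable (fun ω => l1norm (F ω)) μ :=
  integrable_finsetSum _ fun i _ => ((EuclideanSpace.proj (𝕜 := ℝ) i).integrable_comp hF).abs

variable {G g : Ω → EuclideanSpace ℝ (Fin d)}

lemma integrable_signAlignBound (hG : Measurable G) (hGint : Integrable G μ)
    (hg : Integrable g μ) : Integrable (fun ω => signAlignBound (G ω) (g ω)) μ :=
  ((integrable_l1norm hGint).sub (integrable_l1norm (hg.sub hGint))).add
    (integrable_inner_of_norm_le (measurable_signVec.comp hG).aestronglyMeasurable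
      (fun ω => norm_signVec_le (G ω)) (hg.sub hGint))

lemma condExp_sub_ae_eq_zero (hm : m ≤ m₀) [SigmaFinite (μ.trim hm)]
    (hG : StronglyMeasurable[m] G) (hg : Integrable g μ) (hunbiased : μ[g | m] =ᵐ[μ] G) :
    μ[g - G | m] =ᵐ[μ] 0 := by
  have hGint : Integrable G μ := integrable_condExp.congr hunbiased
  filter_upwards [condExp_sub hg hGint m, hunbiased] with ω hω hω'
  rw [hω, Pi.sub_apply, hω', condExp_of_stronglyMeasurable hm hG hGint, sub_self, Pi.zero_apply]

lemma one_sub_mul_integral_l1norm_le_integral_signAlignBound {θ : ℝ} (hm : m ≤ m₀)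
    [SigmaFinite (μ.trim hm)] (hG : StronglyMeasurable[m] G) (hg : Integrable g μ)
    (hunbiased : μ[g | m] =ᵐ[μ] G)
    (hnoise : ∀ᵐ ω ∂μ, μ[fun ω' => l1norm (g ω' - G ω') | m] ω ≤ θ * l1norm (G ω)) :
    (1 - θ) * ∫ ω, l1norm (G ω) ∂μ ≤ ∫ ω, signAlignBound (G ω) (g ω) ∂μ := by
  have hGint : Integrable G μ := integrable_condExp.congr hunbiased
  have herr : ∫ ω, l1norm (g ω - G ω) ∂μ ≤ θ * ∫ ω, l1norm (G ω) ∂μ := by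
    rw [← integral_condExp hm, ← integral_const_mul]
    exact integral_mono_ae integrable_condExp ((integrable_l1norm hGint).const_mul θ) hnoise
  have hsignG : Measurable[m] fun ω => signVec (G ω) := measurable_signVec.comp hG.measurable
  have hcorr : ∫ ω, ⟪signVec (G ω), g ω - G ω⟫ ∂μ = 0 :=
    integral_inner_eq_zero_of_condExp_eq_zero hm hsignG.stronglyMeasurable
      (fun ω => norm_signVec_le (G ω)) (hg.sub hGint) (condExp_sub_ae_eq_zero hm hG hg hunbiased)
  have hcorr_int : Integrable (fun ω => ⟪signVec (G ω), g ω - G ω⟫) μ :=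
    integrable_inner_of_norm_le (hsignG.mono hm le_rfl).aestronglyMeasurable
      (fun ω => norm_signVec_le (G ω)) (hg.sub hGint)
  have herr_int : Integrable (fun ω => l1norm (g ω - G ω)) μ := integrable_l1norm (hg.sub hGint)
  simp only [signAlignBound]
  rw [integral_add ?_ hcorr_int, integral_sub (integrable_l1norm hGint) herr_int, hcorr]
  · linarith
  · exact (integrable_l1norm hGint).sub herr_int

lemma integral_comp_sub_smul_signVec_le [IsProbabilityMeasure μ]
    {L : EuclideanSpace ℝ (Fin d) → ℝ} {Linf η θ : ℝ} (hL : Differentiable ℝ L)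
    (hsmooth : ∀ x y, l1norm (gradient L x - gradient L y) ≤ Linf * linfnorm (x - y))
    (hLinf : 0 ≤ Linf) (hη : 0 ≤ η) (hm : m ≤ m₀) {X : Ω → EuclideanSpace ℝ (Fin d)}
    (hX : Measurable[m] X) (hg : Integrable g μ)
    (hunbiased : μ[g | m] =ᵐ[μ] fun ω => gradient L (X ω))
    (hnoise : ∀ᵐ ω ∂μ, μ[fun ω' => l1norm (g ω' - gradient L (X ω')) | m] ω
      ≤ θ * l1norm (gradient L (X ω)))
    (hLX : Integrable (fun ω => L (X ω)) μ)
    (hLX' : Integrable (fun ω => L (X ω - η • signVec (g ω))) μ) :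
    η * (1 - θ) * ∫ ω, l1norm (gradient L (X ω)) ∂μ
      ≤ ∫ ω, L (X ω) ∂μ - ∫ ω, L (X ω - η • signVec (g ω)) ∂μ + Linf / 2 * η ^ 2 := by
  have hG : StronglyMeasurable[m] fun ω => gradient L (X ω) :=
    ((measurable_gradient L).comp hX).stronglyMeasurable
  have hA := integrable_signAlignBound (hG.measurable.mono hm le_rfl)
    (integrable_condExp.congr hunbiased) hg
  have hdescent : ∫ ω, L (X ω - η • signVec (g ω)) ∂μ
      ≤ ∫ ω, (L (X ω) - η * signAlignBound (gradient L (X ω)) (g ω) + Linf / 2 * η ^ 2) ∂μ :=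
    integral_mono hLX' ((hLX.sub (hA.const_mul η)).add (integrable_const _))
      fun ω => le_sub_smul_signVec hL hsmooth hLinf hη (X ω) (g ω)
  rw [integral_add ?_ (integrable_const _), integral_sub hLX (hA.const_mul η),
    integral_const_mul, integral_const, probReal_univ, one_smul] at hdescent
  swap
  · exact hLX.sub (hA.const_mul η)
  have hkey := mul_le_mul_of_nonneg_left
    (one_sub_mul_integral_l1norm_le_integral_signAlignBound hm hG hg hunbiased hnoise) hη
  linarith

end SignSGDStep

lemma integrable_comp_of_forall_mem_closedBall {Ω E F : Type*} [MeasurableSpace Ω]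
    {μ : Measure Ω} [IsFiniteMeasure μ] [NormedAddCommGroup E] [ProperSpace E]
    [NormedAddCommGroup F] {f : E → F} (hf : Continuous f) {X : Ω → E}
    (hX : AEStronglyMeasurable X μ) {c : E} {r : ℝ} (hXr : ∀ ω, X ω ∈ Metric.closedBall c r) :
    Integrable (fun ω => f (X ω)) μ := by
  obtain ⟨C, hC⟩ := (isCompact_closedBall c r).exists_bound_of_continuousOn hf.continuousOn
  exact Integrable.of_bound (hf.comp_aestronglyMeasurable hX) C
    (ae_of_all _ fun ω => hC _ (hXr ω))

lemma inv_mul_le_sqrt_div_mul_of_le {Linf θ S B : ℝ} {K : ℕ} (hLinf : 0 < Linf) (hθ : θ < 1)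
    (hK : 1 ≤ K) (h : (Real.sqrt (Linf * K))⁻¹ * (1 - θ) * S
      ≤ B + K * (Linf / 2 * ((Real.sqrt (Linf * K))⁻¹) ^ 2)) :
    (K : ℝ)⁻¹ * S ≤ Real.sqrt Linf / ((1 - θ) * Real.sqrt K) * (B + 1 / 2) := by
  have hK₀ : (0 : ℝ) < K := by exact_mod_cast hK
  have hθ₁ : 0 < 1 - θ := sub_pos.2 hθ
  have hhalf : (K : ℝ) * (Linf / 2 * ((Real.sqrt (Linf * K))⁻¹) ^ 2) = 1 / 2 := by
    rw [inv_pow, Real.sq_sqrt (by positivity)]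
    field_simp
  have hrate : (K : ℝ)⁻¹
      = Real.sqrt Linf / ((1 - θ) * Real.sqrt K) * ((Real.sqrt (Linf * K))⁻¹ * (1 - θ)) := by
    rw [Real.sqrt_mul hLinf.le]
    field_simp
    rw [Real.sq_sqrt hK₀.le]
  rw [hrate, mul_assoc]
  exact mul_le_mul_of_nonneg_left (hhalf ▸ h) (by positivity)

lemma sum_range_le_sub_add_of_le_sub_add {a b : ℕ → ℝ} {c lo : ℝ} {K : ℕ}
    (hstep : ∀ k, b k ≤ a k - a (k + 1) + c) (hlo : lo ≤ a K) :
    ∑ k ∈ Finset.range K, b k ≤ a 0 - lo + K * c := by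
  calc ∑ k ∈ Finset.range K, b k ≤ ∑ k ∈ Finset.range K, (a k - a (k + 1) + c) :=
        Finset.sum_le_sum fun k _ => hstep k
    _ = a 0 - a K + K * c := by
        rw [Finset.sum_add_distrib, Finset.sum_range_sub', Finset.sum_const, Finset.card_range,
          nsmul_eq_mul]
    _ ≤ a 0 - lo + K * c := by linarith

section SignSGD
variable {d : ℕ} {Ω : Type*} {x g : ℕ → Ω → EuclideanSpace ℝ (Fin d)}

lemma genBy_le [MeasurableSpace Ω] (hx : ∀ k, Measurable (x k)) (k : ℕ) :
    genBy x k ≤ ‹MeasurableSpace Ω› :=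
  iSup₂_le fun i _ => (hx i).comap_le

lemma measurable_genBy_self (k : ℕ) : Measurable[genBy x k] (x k) :=
  Measurable.of_comap_le (le_iSup₂ (f := fun i (_ : i ∈ Finset.range (k + 1)) =>
    MeasurableSpace.comap (x i) inferInstance) k (Finset.self_mem_range_succ k))

lemma signSGD_mem_closedBall {x₀ : EuclideanSpace ℝ (Fin d)} {η : ℝ} (hη : 0 ≤ η)
    (hx0 : ∀ ω, x 0 ω = x₀) (hupdate : ∀ k ω, x (k + 1) ω = x k ω - η • signVec (g k ω))
    (k : ℕ) (ω : Ω) : x k ω ∈ Metric.closedBall x₀ (k * (η * Real.sqrt d)) := by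
  induction k with
  | zero => simp [hx0]
  | succ k ih =>
    rw [Metric.mem_closedBall] at ih ⊢
    calc dist (x (k + 1) ω) x₀ ≤ dist (x (k + 1) ω) (x k ω) + dist (x k ω) x₀ :=
          dist_triangle _ _ _
      _ ≤ η * Real.sqrt d + k * (η * Real.sqrt d) := by
          gcongr
          rw [hupdate, dist_eq_norm, sub_sub_cancel_left, norm_neg, norm_smul,
            Real.norm_of_nonneg hη]
          exact mul_le_mul_of_nonneg_left (norm_signVec_le _) hη
      _ = (k + 1 : ℕ) * (η * Real.sqrt d) := by push_cast; ring

end SignSGD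

/-- SignSGD with adaptive batch sizes, constant learning rate `η = 1/√(Linf·K)`:
`(1/K)·∑_{k<K} E[‖∇L(x_k)‖₁] ≤ (√Linf / ((1 − θ)·√K)) · (L(x₀) − L* + 1/2)`. -/
theorem stmt7 {d : ℕ} (L : EuclideanSpace ℝ (Fin d) → ℝ) (hL : Differentiable ℝ L)
    (Linf : ℝ) (hLinf_pos : 0 < Linf)
    (hsmooth : ∀ x y, l1norm (gradient L x - gradient L y) ≤ Linf * linfnorm (x - y))
    (Lstar : ℝ) (hinf : IsGLB (Set.range L) Lstar)
    (θ : ℝ) (hθ : θ ∈ Set.Ioo (0 : ℝ) 1) (K : ℕ) (hK : 1 ≤ K)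
    {Ω : Type*} [MeasurableSpace Ω] (μ : Measure Ω) [IsProbabilityMeasure μ]
    (x : ℕ → Ω → EuclideanSpace ℝ (Fin d)) (g : ℕ → Ω → EuclideanSpace ℝ (Fin d))
    (x₀ : EuclideanSpace ℝ (Fin d)) (hx0 : ∀ ω, x 0 ω = x₀)
    (hxmeas : ∀ k, Measurable (x k))
    (hg_int : ∀ k, Integrable (g k) μ)
    (hupdate : ∀ k ω, x (k + 1) ω = x k ω - (Real.sqrt (Linf * K))⁻¹ • signVec (g k ω))
    (hunbiased : ∀ k, μ[g k | genBy x k] =ᵐ[μ] fun ω => gradient L (x k ω))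
    (hnoise : ∀ k, ∀ᵐ ω ∂μ,
      (μ[fun ω' => l1norm (g k ω' - gradient L (x k ω')) | genBy x k]) ω
        ≤ θ * l1norm (gradient L (x k ω))) :
    (K : ℝ)⁻¹ * ∑ k ∈ Finset.range K, ∫ ω, l1norm (gradient L (x k ω)) ∂μ
      ≤ Real.sqrt Linf / ((1 - θ) * Real.sqrt K) * (L x₀ - Lstar + 1 / 2) := by
  have hη : 0 ≤ (Real.sqrt (Linf * K))⁻¹ := by positivity
  have hLx_int (k : ℕ) : Integrable (fun ω => L (x k ω)) μ :=
    integrable_comp_of_forall_mem_closedBall hL.continuous (hxmeas k).aestronglyMeasurable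
      (signSGD_mem_closedBall hη hx0 hupdate k)
  have hstep (k : ℕ) := integral_comp_sub_smul_signVec_le hL hsmooth hLinf_pos.le hη
    (genBy_le hxmeas k) (measurable_genBy_self k) (hg_int k) (hunbiased k) (hnoise k)
    (hLx_int k) (by simpa only [← hupdate] using hLx_int (k + 1))
  simp only [← hupdate] at hstep
  have hsum := sum_range_le_sub_add_of_le_sub_add hstep
    (integral_mono (integrable_const Lstar) (hLx_int K) fun ω => hinf.1 ⟨x K ω, rfl⟩)
  simp only [← Finset.mul_sum, hx0, integral_const, probReal_univ, one_smul] at hsum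
  exact inv_mul_le_sqrt_div_mul_of_le hLinf_pos hθ.2 hK hsum
end
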